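/- Let Π⁺ and Û⁺ be measures on (0,∞) and [0,∞) respectively, related on (0,∞) by Π⁺(dx) = ∫_0^∞ Π(y + dx) Û⁺(dy) for a measure Π on (0,∞), where Π(y+dx) denotes the translate as above. Suppose there exist 0 ≤ a < b ≤ ∞ such that Lebesgue measure restricted to (a,b) is absolutely continuous with respect to Π restricted to (a,b), and Û⁺([0,ε)) > 0 for every ε > 0. Then Lebesgue measure restricted to (a,b) is absolutely continuous with respect to Π⁺ restricted to (a,b). -/

import Mathlib

open MeasureTheory Set
open scoped ENNReal

/-! Cut a `Leb`-nonnull `B ⊂ (a,b)` down to a piece `C` lying a fixed distance `δ` below `b`. Then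
every translate `C + y`, `0 ≤ y < δ`, stays in `(a,b)` and has the Lebesgue measure of `C`, so
`Π (C + y) > 0`; integrating over `y ∈ [0,δ)`, a set of positive `Û⁺`-measure, gives `Π⁺ C > 0`.
The integrand need not be measurable since `Π` is arbitrary, so it is first bounded below by the
translates under an s-finite measure `ν ≤ Π` with `Leb|(a,b) ≪ ν`. -/

namespace MeasureTheory.Measure

variable {α : Type*} [MeasurableSpace α]

/-- On the set `s` where `π` is σ-finite relative to `μ` we keep `π`; off `s`, every `μ`-nonnull
set has infinite `π`-measure, so `μ` itself is a minorant of `π` there. -/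
theorem exists_sFinite_le_absolutelyContinuous {μ π : Measure α} [SFinite μ] (h : μ ≪ π) :
    ∃ ν : Measure α, SFinite ν ∧ ν ≤ π ∧ μ ≪ ν := by
  set s := π.sigmaFiniteSetWRT μ
  have hs : MeasurableSet s := measurableSet_sigmaFiniteSetWRT
  refine ⟨π.restrict s + μ.restrict sᶜ, inferInstance, ?_, ?_⟩
  · refine Measure.le_iff.2 fun t ht => ?_
    have hμπ : μ (t ∩ sᶜ) ≤ π (t ∩ sᶜ) := by
      by_cases hμt : μ (t ∩ sᶜ) = 0
      · simp [hμt]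
      · rw [measure_eq_top_of_subset_compl_sigmaFiniteSetWRT inter_subset_right hμt]
        exact le_top
    calc (π.restrict s + μ.restrict sᶜ) t = π (t ∩ s) + μ (t ∩ sᶜ) := by
          rw [add_apply, restrict_apply ht, restrict_apply ht]
      _ ≤ π (t ∩ s) + π (t ∩ sᶜ) := by gcongr
      _ = π t := by rw [← sdiff_eq, measure_inter_add_sdiff t hs]
  · refine AbsolutelyContinuous.mk fun t ht hνt => ?_
    rw [add_apply, add_eq_zero, restrict_apply ht, restrict_apply ht] at hνt
    calc μ t = μ (t ∩ s) + μ (t ∩ sᶜ) := by rw [← sdiff_eq, measure_inter_add_sdiff t hs]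
      _ = 0 := by rw [h hνt.1, hνt.2, add_zero]

end MeasureTheory.Measure

section Translates

variable {G : Type*} [AddGroup G] [MeasurableSpace G] [MeasurableAdd₂ G] [MeasurableNeg G]

theorem measurable_measure_preimage_sub_right (ν : Measure G) [SFinite ν] {C : Set G}
    (hC : MeasurableSet C) : Measurable fun y => ν ((· - y) ⁻¹' C) :=
  measurable_measure_prodMk_left (s := {p : G × G | p.2 - p.1 ∈ C})
    (measurable_snd.sub measurable_fst hC)

theorem setLIntegral_measure_preimage_sub_pos {μ π U : Measure G} [μ.IsAddRightInvariant]
    [SFinite μ] {S C A : Set G} (hμπ : μ.restrict S ≪ π) (hC : MeasurableSet C) (hμC : μ C ≠ 0)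
    (hUA : U A ≠ 0) (hCA : ∀ y ∈ A, (· - y) ⁻¹' C ⊆ S) :
    0 < ∫⁻ y in A, π ((· - y) ⁻¹' C) ∂U := by
  obtain ⟨ν, _, hνπ, hμν⟩ := Measure.exists_sFinite_le_absolutelyContinuous hμπ
  have hν : A ⊆ Function.support fun y => ν ((· - y) ⁻¹' C) := fun y hy hν => by
    have hμ := hμν hν
    rw [Measure.restrict_eq_self μ (hCA y hy)] at hμ
    exact hμC (by simpa [sub_eq_add_neg] using hμ)
  calc 0 < ∫⁻ y in A, ν ((· - y) ⁻¹' C) ∂U := by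
        rw [setLIntegral_pos_iff (measurable_measure_preimage_sub_right ν hC),
          inter_eq_right.2 hν]
        exact pos_iff_ne_zero.2 hUA
    _ ≤ ∫⁻ y in A, π ((· - y) ⁻¹' C) ∂U := lintegral_mono fun y => hνπ _

end Translates

theorem setOf_lt_ereal_subset_iUnion (a : ℝ) (b : EReal) :
    {x : ℝ | a < x ∧ (x : EReal) < b} ⊆
      ⋃ n : ℕ, {x : ℝ | a < x ∧ ((x + 1 / (n + 1) : ℝ) : EReal) < b} := by
  rintro x ⟨hxa, hxb⟩
  obtain ⟨r, hxr, hrb⟩ := EReal.lt_iff_exists_real_btwn.1 hxb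
  obtain ⟨n, hn⟩ := exists_nat_one_div_lt (sub_pos.2 (EReal.coe_lt_coe_iff.1 hxr))
  exact mem_iUnion.2 ⟨n, hxa, lt_trans (EReal.coe_lt_coe_iff.2 (by linarith)) hrb⟩

theorem measurableSet_setOf_lt_and_add_lt_ereal (a δ : ℝ) (b : EReal) :
    MeasurableSet {x : ℝ | a < x ∧ ((x + δ : ℝ) : EReal) < b} :=
  (measurableSet_lt measurable_const measurable_id).inter
    (measurableSet_lt (measurable_coe_real_ereal.comp (measurable_add_const δ)) measurable_const)

theorem preimage_sub_setOf_add_lt_ereal_subset {a δ y : ℝ} {b : EReal} (hy0 : 0 ≤ y)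
    (hyδ : y < δ) :
    (· - y) ⁻¹' {x : ℝ | a < x ∧ ((x + δ : ℝ) : EReal) < b} ⊆ {x | a < x ∧ (x : EReal) < b} :=
  fun x ⟨hxa, hxb⟩ => ⟨by linarith, lt_trans (EReal.coe_lt_coe_iff.2 (by linarith)) hxb⟩

theorem absolute_continuity_transfer_general
    (Pi Pip Uh : Measure ℝ)
    (hrel : ∀ B : Set ℝ, MeasurableSet B → B ⊆ Set.Ioi 0 →
      Pip B = ∫⁻ y in Set.Ici (0 : ℝ), Pi ((fun x => x - y) ⁻¹' B) ∂Uh)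
    (a : ℝ) (b : EReal) (ha : 0 ≤ a)
    (hac : volume.restrict {x : ℝ | a < x ∧ (x : EReal) < b}
      ≪ Pi.restrict {x : ℝ | a < x ∧ (x : EReal) < b})
    (hU0 : ∀ ε : ℝ, 0 < ε → 0 < Uh (Set.Ico 0 ε)) :
    volume.restrict {x : ℝ | a < x ∧ (x : EReal) < b}
      ≪ Pip.restrict {x : ℝ | a < x ∧ (x : EReal) < b} := by
  have hacPi := hac.trans (Measure.absolutelyContinuous_of_le Measure.restrict_le_self)
  refine Measure.AbsolutelyContinuous.mk fun E hE hPipE => ?_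
  rw [Measure.restrict_apply hE] at hPipE ⊢
  refine measure_mono_null ((inter_subset_inter_right E (setOf_lt_ereal_subset_iUnion a b)).trans
    (inter_iUnion _ _).le) (measure_iUnion_null fun n => ?_)
  set δ : ℝ := 1 / (n + 1)
  set C := E ∩ {x : ℝ | a < x ∧ ((x + δ : ℝ) : EReal) < b}
  have hδ : 0 < δ := Nat.one_div_pos_of_nat
  have hC : MeasurableSet C := hE.inter (measurableSet_setOf_lt_and_add_lt_ereal a δ b)
  have htranslate : ∀ y ∈ Ico 0 δ, (· - y) ⁻¹' C ⊆ {x : ℝ | a < x ∧ (x : EReal) < b} :=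
    fun y hy => (preimage_mono inter_subset_right).trans
      (preimage_sub_setOf_add_lt_ereal_subset hy.1 hy.2)
  have hCS : C ⊆ E ∩ {x : ℝ | a < x ∧ (x : EReal) < b} := fun x hx =>
    ⟨hx.1, htranslate 0 ⟨le_rfl, hδ⟩ (by rwa [mem_preimage, sub_zero])⟩
  by_contra hvol
  refine (setLIntegral_measure_preimage_sub_pos hacPi hC hvol (hU0 δ hδ).ne' htranslate).ne'
    (nonpos_iff_eq_zero.1 ?_)
  calc ∫⁻ y in Ico 0 δ, Pi ((· - y) ⁻¹' C) ∂Uh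
      ≤ ∫⁻ y in Ici 0, Pi ((· - y) ⁻¹' C) ∂Uh := lintegral_mono_set Ico_subset_Ici_self
    _ = Pip C := (hrel C hC fun x hx => ha.trans_lt hx.2.1).symm
    _ = 0 := measure_mono_null hCS hPipE

/-- Transfer of absolute continuity through the équation amicale inversée: if on `(0,∞)`
`Π⁺(B) = ∫_0^∞ Π(B + y) Û⁺(dy)`, Lebesgue measure restricted to the interval `(a,b)`
(with `0 ≤ a < b ≤ ∞`) is absolutely continuous w.r.t. `Π` there, and `Û⁺([0,ε)) > 0`
for every `ε > 0`, then Lebesgue measure restricted to `(a,b)` is absolutely continuous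
w.r.t. `Π⁺` there. -/
theorem absolute_continuity_transfer
    (Pi Pip Uh : Measure ℝ)
    (hPi : Pi (Set.Iic 0) = 0) (hPip : Pip (Set.Iic 0) = 0) (hUhsupp : Uh (Set.Iio 0) = 0)
    (hrel : ∀ B : Set ℝ, MeasurableSet B → B ⊆ Set.Ioi 0 →
      Pip B = ∫⁻ y in Set.Ici (0 : ℝ), Pi ((fun x => x - y) ⁻¹' B) ∂Uh)
    (a : ℝ) (b : EReal) (ha : 0 ≤ a) (hab : (a : EReal) < b)
    (hac : volume.restrict {x : ℝ | a < x ∧ (x : EReal) < b}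
      ≪ Pi.restrict {x : ℝ | a < x ∧ (x : EReal) < b})
    (hU0 : ∀ ε : ℝ, 0 < ε → 0 < Uh (Set.Ico 0 ε)) :
    volume.restrict {x : ℝ | a < x ∧ (x : EReal) < b}
      ≪ Pip.restrict {x : ℝ | a < x ∧ (x : EReal) < b} :=
  absolute_continuity_transfer_general Pi Pip Uh hrel a b ha hac hU0
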